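/- arXiv:1702.01282 — 2 statements merged into one kernel-verified Lean document; each statement's English description precedes it below -/
import Mathlib

section
/- The map which assigns to each totally isotropic 2-plane x in ℝ^{2,n+2} the unique pair (v_1, v_2) of vectors in ℝ^{n+2} such that {f_1 + v_1, f_2 + v_2} is a basis of x, is a well-defined bijection from the space of totally isotropic 2-dimensional subspaces of ℝ^{2,n+2} onto the Stiefel manifold V_2(ℝ^{n+2}) of orthonormal 2-frames in ℝ^{n+2}. -/
/-!
If `u = (a, w)` lies in a totally isotropic subspace then `-⟨a, a⟩ + ⟨w, w⟩ = 0`, so `a = 0`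
forces `w = 0`. Hence projecting a totally isotropic 2-plane to `ℝ²` is injective, thus bijective
by dimension, and the plane is the graph of a linear map `ℝ² → ℝ^{n+2}`; `vᵢ` is the image of `fᵢ`.
Conversely the form on the generators `fᵢ + vᵢ` is `-δᵢⱼ + ⟨vᵢ, vⱼ⟩`, so their span is totally
isotropic exactly when `(v₁, v₂)` is orthonormal.
-/

open Submodule Module Matrix

namespace LinearMap.BilinForm

variable {R M : Type*} [CommSemiring R] [AddCommMonoid M] [Module R M]

def IsTotallyIsotropic (B : LinearMap.BilinForm R M) (x : Submodule R M) : Prop :=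
  ∀ u ∈ x, ∀ v ∈ x, B u v = 0

theorem isTotallyIsotropic_span (B : LinearMap.BilinForm R M) {S : Set M}
    (hS : ∀ s ∈ S, ∀ t ∈ S, B s t = 0) : B.IsTotallyIsotropic (span R S) := by
  intro u hu v hv
  have hSv : S ⊆ LinearMap.ker (B.flip v) := fun s hs =>
    (span_le.2 fun t ht => hS s hs t ht : span R S ≤ LinearMap.ker (B s)) hv
  exact span_le.2 hSv hu

end LinearMap.BilinForm

open LinearMap.BilinForm

section SplitForm

variable {ι κ : Type*} [Fintype ι] [Fintype κ]

def splitForm : LinearMap.BilinForm ℝ ((ι → ℝ) × (κ → ℝ)) :=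
  -(dotProductBilin ℝ ℝ).compl₁₂ (LinearMap.fst ℝ _ _) (LinearMap.fst ℝ _ _) +
    (dotProductBilin ℝ ℝ).compl₁₂ (LinearMap.snd ℝ _ _) (LinearMap.snd ℝ _ _)

theorem splitForm_apply (u v : (ι → ℝ) × (κ → ℝ)) :
    splitForm u v = -(u.1 ⬝ᵥ v.1) + u.2 ⬝ᵥ v.2 :=
  rfl

theorem eq_zero_of_fst_eq_zero_of_isotropic {x : Submodule ℝ ((ι → ℝ) × (κ → ℝ))}
    (hx : splitForm.IsTotallyIsotropic x) {u : (ι → ℝ) × (κ → ℝ)} (hu : u ∈ x)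
    (h₁ : u.1 = 0) : u = 0 := by
  have h₂ : u.2 ⬝ᵥ u.2 = 0 := by simpa [splitForm_apply, h₁] using hx u hu u hu
  exact Prod.ext h₁ (dotProduct_self_eq_zero.1 h₂)

theorem existsUnique_mk_mem_of_isotropic {x : Submodule ℝ ((ι → ℝ) × (κ → ℝ))}
    (hrank : finrank ℝ x = Fintype.card ι) (hx : splitForm.IsTotallyIsotropic x)
    (a : ι → ℝ) : ∃! w : κ → ℝ, (a, w) ∈ x := by
  set f : x →ₗ[ℝ] ι → ℝ := (LinearMap.fst ℝ _ _).comp x.subtype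
  have hf : Function.Injective f := by
    rw [← LinearMap.ker_eq_bot, eq_bot_iff]
    intro u hu
    exact (mem_bot ℝ).2 (Subtype.ext (eq_zero_of_fst_eq_zero_of_isotropic hx u.2 hu))
  obtain ⟨⟨u, hu⟩, rfl⟩ := (LinearMap.injective_iff_surjective_of_finrank_eq_finrank
    (by rw [hrank, Module.finrank_fintype_fun_eq_card])).1 hf a
  refine ⟨u.2, hu, fun w hw => ?_⟩
  have hdiff := eq_zero_of_fst_eq_zero_of_isotropic hx (x.sub_mem hw hu) (sub_self u.1)
  simpa [sub_eq_zero] using congrArg Prod.snd hdiff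

end SplitForm

section Planes

variable {κ : Type*}

def framePlane (v₁ v₂ : κ → ℝ) : Submodule ℝ ((Fin 2 → ℝ) × (κ → ℝ)) :=
  span ℝ {((Pi.single 0 1 : Fin 2 → ℝ), v₁), ((Pi.single 1 1 : Fin 2 → ℝ), v₂)}

theorem mk_single_zero_mem_framePlane (v₁ v₂ : κ → ℝ) :
    ((Pi.single 0 1 : Fin 2 → ℝ), v₁) ∈ framePlane v₁ v₂ :=
  subset_span (Set.mem_insert _ _)

theorem mk_single_one_mem_framePlane (v₁ v₂ : κ → ℝ) :
    ((Pi.single 1 1 : Fin 2 → ℝ), v₂) ∈ framePlane v₁ v₂ :=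
  subset_span (Set.mem_insert_of_mem _ rfl)

theorem finrank_framePlane (v₁ v₂ : κ → ℝ) : finrank ℝ (framePlane v₁ v₂) = 2 := by
  have hfst : LinearIndependent ℝ
      (LinearMap.fst ℝ _ _ ∘ ![((Pi.single 0 1 : Fin 2 → ℝ), v₁), (Pi.single 1 1, v₂)]) := by
    convert (Pi.basisFun ℝ (Fin 2)).linearIndependent using 1
    ext i : 1
    fin_cases i <;> simp
  have := finrank_span_eq_card (LinearIndependent.of_comp _ hfst)
  rwa [Matrix.range_cons_cons_empty, Fintype.card_fin] at this

theorem framePlane_eq_of_mem {x : Submodule ℝ ((Fin 2 → ℝ) × (κ → ℝ))}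
    (hrank : finrank ℝ x = 2) {v₁ v₂ : κ → ℝ}
    (h₁ : ((Pi.single 0 1 : Fin 2 → ℝ), v₁) ∈ x) (h₂ : ((Pi.single 1 1 : Fin 2 → ℝ), v₂) ∈ x) :
    framePlane v₁ v₂ = x :=
  have := Module.finite_of_finrank_eq_succ hrank
  eq_of_le_of_finrank_eq (span_le.2 (Set.insert_subset h₁ (Set.singleton_subset_iff.2 h₂)))
    ((finrank_framePlane v₁ v₂).trans hrank.symm)

theorem isotropic_framePlane_iff [Fintype κ] (v₁ v₂ : κ → ℝ) :
    splitForm.IsTotallyIsotropic (framePlane v₁ v₂) ↔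
      v₁ ⬝ᵥ v₁ = 1 ∧ v₂ ⬝ᵥ v₂ = 1 ∧ v₁ ⬝ᵥ v₂ = 0 := by
  have h₁ := mk_single_zero_mem_framePlane v₁ v₂
  have h₂ := mk_single_one_mem_framePlane v₁ v₂
  constructor
  · intro hx
    have h₁₁ := hx _ h₁ _ h₁
    have h₂₂ := hx _ h₂ _ h₂
    have h₁₂ := hx _ h₁ _ h₂
    simp [splitForm_apply, neg_add_eq_zero] at h₁₁ h₂₂ h₁₂
    exact ⟨h₁₁.symm, h₂₂.symm, h₁₂⟩
  · rintro ⟨h₁₁, h₂₂, h₁₂⟩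
    refine isTotallyIsotropic_span _ ?_
    simp only [Set.mem_insert_iff, Set.mem_singleton_iff]
    rintro s (rfl | rfl) t (rfl | rfl) <;>
      simp [splitForm_apply, h₁₁, h₂₂, h₁₂, dotProduct_comm v₂ v₁]

end Planes
/-- Let `ℝ^{2,n+2} = ℝ² ⊕ ℝ^{n+2}` carry the symmetric bilinear form
`h((x,u),(y,v)) = -⟨x,y⟩ + ⟨u,v⟩` (negative definite on `ℝ²` with orthonormal basis
`f₁ = (e₁,0), f₂ = (e₂,0)`, positive definite on `ℝ^{n+2}`).  The map assigning to each
totally isotropic 2-plane `x` in `ℝ^{2,n+2}` the unique pair `(v₁, v₂)` of vectors of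
`ℝ^{n+2}` such that `{f₁ + v₁, f₂ + v₂}` is a basis of `x` is a well-defined bijection from
the totally isotropic 2-dimensional subspaces of `ℝ^{2,n+2}` onto the Stiefel manifold
`V₂(ℝ^{n+2})` of orthonormal 2-frames in `ℝ^{n+2}`: the spanning pair exists, is unique, is
an orthonormal 2-frame, and conversely every orthonormal 2-frame arises from a unique
totally isotropic 2-plane this way. -/
theorem isotropic_two_planes_biject_with_stiefel (n : ℕ) :
    (∀ x : Submodule ℝ ((Fin 2 → ℝ) × (Fin (n + 2) → ℝ)),
      Module.finrank ℝ x = 2 →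
      (∀ u ∈ x, ∀ v ∈ x,
        -(∑ i, u.1 i * v.1 i) + ∑ i, u.2 i * v.2 i = (0 : ℝ)) →
      (∃! p : (Fin (n + 2) → ℝ) × (Fin (n + 2) → ℝ),
        Submodule.span ℝ
          {((Pi.single 0 1 : Fin 2 → ℝ), p.1), ((Pi.single 1 1 : Fin 2 → ℝ), p.2)} = x) ∧
      (∀ p : (Fin (n + 2) → ℝ) × (Fin (n + 2) → ℝ),
        Submodule.span ℝ
          {((Pi.single 0 1 : Fin 2 → ℝ), p.1), ((Pi.single 1 1 : Fin 2 → ℝ), p.2)} = x →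
        (∑ i, p.1 i * p.1 i) = 1 ∧ (∑ i, p.2 i * p.2 i) = 1 ∧ (∑ i, p.1 i * p.2 i) = 0)) ∧
    (∀ p : (Fin (n + 2) → ℝ) × (Fin (n + 2) → ℝ),
      (∑ i, p.1 i * p.1 i) = 1 → (∑ i, p.2 i * p.2 i) = 1 → (∑ i, p.1 i * p.2 i) = 0 →
      Module.finrank ℝ
        ↥(Submodule.span ℝ
          {((Pi.single 0 1 : Fin 2 → ℝ), p.1), ((Pi.single 1 1 : Fin 2 → ℝ), p.2)}) = 2 ∧
      (∀ u ∈ Submodule.span ℝ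
          {((Pi.single 0 1 : Fin 2 → ℝ), p.1), ((Pi.single 1 1 : Fin 2 → ℝ), p.2)},
       ∀ v ∈ Submodule.span ℝ
          {((Pi.single 0 1 : Fin 2 → ℝ), p.1), ((Pi.single 1 1 : Fin 2 → ℝ), p.2)},
        -(∑ i, u.1 i * v.1 i) + ∑ i, u.2 i * v.2 i = (0 : ℝ))) := by
  refine ⟨fun x hrank hx => ?_, fun p h₁₁ h₂₂ h₁₂ =>
    ⟨finrank_framePlane p.1 p.2, (isotropic_framePlane_iff p.1 p.2).2 ⟨h₁₁, h₂₂, h₁₂⟩⟩⟩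
  have hgraph := existsUnique_mk_mem_of_isotropic (hrank.trans (Fintype.card_fin 2).symm) hx
  obtain ⟨v₁, hv₁, hv₁_unique⟩ := hgraph (Pi.single 0 1)
  obtain ⟨v₂, hv₂, hv₂_unique⟩ := hgraph (Pi.single 1 1)
  refine ⟨⟨(v₁, v₂), framePlane_eq_of_mem hrank hv₁ hv₂, fun q hq => ?_⟩, ?_⟩
  · subst hq
    exact Prod.ext (hv₁_unique _ (mk_single_zero_mem_framePlane q.1 q.2))
      (hv₂_unique _ (mk_single_one_mem_framePlane q.1 q.2))
  · rintro q rfl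
    exact (isotropic_framePlane_iff q.1 q.2).1 hx
end

section
/- Let H̃ be the group obtained as the quotient of {(e^{it}, e^{is}, a) ∈ U(1) × U(1) × Spin(n) : e^{it} = ±e^{is}} by the normal subgroup generated by (-1,-1,1) and (-1,1,-1). Then the map ⟨e^{it}, e^{is}, a⟩ ↦ (e^{2is}, e^{i(t-s)} a) is a well-defined Lie group isomorphism H̃ → SO(2) × Spin(n), with inverse (e^{is}, a) ↦ ⟨e^{is/2}, e^{is/2}, a⟩. -/
/-!
The map `⟨z, w, a⟩ ↦ (w², ε a)`, where `ε = 1` if `z = w` and `ε = m` if `z = -w`, is a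
homomorphism on `pmSubgroup` because `m` is central of order two. It is onto because every
element of the circle is a square, and its kernel consists of the four elements `1`, `g₁`, `g₂`,
`g₁ g₂` with `g₁ = (-1, -1, 1)`, `g₂ = (-1, 1, m)`; so it is exactly the normal closure of
`{g₁, g₂}`, and the first isomorphism theorem gives the isomorphism.
-/

/-- The element `-1` of the circle group `U(1)`. -/
def negOne : Circle := ⟨-1, by simp [Submonoid.unitSphere, mem_sphere_zero_iff_norm]⟩

lemma negOne_mul_negOne : negOne * negOne = 1 := by
  apply Subtype.ext
  simp [negOne]
  show ((-1 : ℂ) * (-1)) = 1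
  norm_num

lemma negOne_inv : negOne⁻¹ = negOne := by
  rw [inv_eq_iff_mul_eq_one, negOne_mul_negOne]

/-- The subgroup `{(e^{it}, e^{is}, a) ∈ U(1) × U(1) × Spin(n) : e^{it} = ±e^{is}}`. -/
noncomputable def pmSubgroup (Spin : Type) [Group Spin] : Subgroup (Circle × Circle × Spin) where
  carrier := {x | x.1 = x.2.1 ∨ x.1 = negOne * x.2.1}
  one_mem' := Or.inl rfl
  mul_mem' := by
    intro x y hx hy
    obtain ⟨z, w, a⟩ := x
    obtain ⟨z', w', a'⟩ := y
    simp only [Set.mem_setOf_eq] at hx hy ⊢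
    simp only [Prod.mk_mul_mk] at hx hy ⊢
    obtain h | h := hx <;> obtain h' | h' := hy <;> subst h <;> subst h'
    · exact Or.inl rfl
    · right; rw [mul_left_comm]
    · right; rw [mul_assoc]
    · left; rw [mul_mul_mul_comm, negOne_mul_negOne, one_mul]
  inv_mem' := by
    intro x hx
    obtain ⟨z, w, a⟩ := x
    simp only [Set.mem_setOf_eq] at hx ⊢
    simp only [Prod.inv_mk] at hx ⊢
    obtain h | h := hx <;> subst h
    · exact Or.inl rfl
    · right; rw [mul_inv_rev, negOne_inv, mul_comm]

lemma negOne_ne_one : negOne ≠ 1 := fun h =>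
  absurd (congrArg Subtype.val h) (by norm_num [negOne])

lemma Circle.eq_one_or_eq_negOne_of_sq_eq_one {w : Circle} (h : w ^ 2 = 1) :
    w = 1 ∨ w = negOne := by
  have h' : (w : ℂ) ^ 2 = 1 := by simpa using congrArg Subtype.val h
  exact (sq_eq_one_iff.mp h').imp Subtype.ext Subtype.ext

lemma Circle.exp_half_sq (θ : ℝ) : Circle.exp (θ / 2) ^ 2 = Circle.exp θ := by
  rw [sq, ← Circle.exp_add, add_halves]

namespace pmSubgroup

variable {Spin : Type} [Group Spin]

lemma exists_eq_mk (x : pmSubgroup Spin) : ∃ (w : Circle) (a : Spin),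
    x = ⟨(w, w, a), Or.inl rfl⟩ ∨ x = ⟨(negOne * w, w, a), Or.inr rfl⟩ := by
  rcases x.2 with h | h
  · exact ⟨_, _, Or.inl (Subtype.ext (Prod.ext h rfl))⟩
  · exact ⟨_, _, Or.inr (Subtype.ext (Prod.ext h rfl))⟩

noncomputable def ratio : pmSubgroup Spin →* Circle where
  toFun x := x.1.1 / x.1.2.1
  map_one' := div_one 1
  map_mul' _ _ := mul_div_mul_comm _ _ _ _

lemma ratio_eq_one_or_eq_negOne (x : pmSubgroup Spin) : ratio x = 1 ∨ ratio x = negOne := by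
  obtain ⟨w, a, rfl | rfl⟩ := exists_eq_mk x
  · exact Or.inl (div_self' w)
  · exact Or.inr (mul_div_cancel_right negOne w)

variable {m : Spin}

open Classical in
/-- The factor `e^{i(t-s)} = ±1` acting on `Spin`: `-1` acts as left multiplication by `m`. -/
noncomputable def sign (hm2 : m ^ 2 = 1) : pmSubgroup Spin →* Spin where
  toFun x := if ratio x = 1 then 1 else m
  map_one' := if_pos (map_one ratio)
  map_mul' x y := by
    have hm : m * m = 1 := by rw [← sq, hm2]
    rcases ratio_eq_one_or_eq_negOne x with hx | hx <;>
      rcases ratio_eq_one_or_eq_negOne y with hy | hy <;>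
      simp [hx, hy, negOne_ne_one, negOne_mul_negOne, hm]

lemma sign_of_ratio_eq_one (hm2 : m ^ 2 = 1) {x : pmSubgroup Spin} (h : ratio x = 1) :
    sign hm2 x = 1 :=
  if_pos h

lemma sign_of_ratio_eq_negOne (hm2 : m ^ 2 = 1) {x : pmSubgroup Spin} (h : ratio x = negOne) :
    sign hm2 x = m :=
  if_neg (h ▸ negOne_ne_one)

lemma sign_mem_center (hmc : m ∈ Subgroup.center Spin) (hm2 : m ^ 2 = 1)
    (x : pmSubgroup Spin) : sign hm2 x ∈ Subgroup.center Spin := by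
  rcases ratio_eq_one_or_eq_negOne x with h | h
  · rw [sign_of_ratio_eq_one hm2 h]
    exact Subgroup.one_mem _
  · rw [sign_of_ratio_eq_negOne hm2 h]
    exact hmc

noncomputable def toCircleProd (hmc : m ∈ Subgroup.center Spin) (hm2 : m ^ 2 = 1) :
    pmSubgroup Spin →* Circle × Spin where
  toFun x := (x.1.2.1 ^ 2, sign hm2 x * x.1.2.2)
  map_one' := by simp
  map_mul' x y := by
    have hcomm : sign hm2 y * x.1.2.2 = x.1.2.2 * sign hm2 y :=
      Subgroup.mem_center_iff.mp (sign_mem_center hmc hm2 y) _ |>.symm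
    ext
    · exact mul_pow _ _ 2
    · simp only [map_mul, Subgroup.coe_mul, Prod.snd_mul, Prod.mk_mul_mk]
      rw [mul_assoc, ← mul_assoc (sign hm2 y), hcomm, mul_assoc, mul_assoc]

variable (hmc : m ∈ Subgroup.center Spin) (hm2 : m ^ 2 = 1)

lemma toCircleProd_mk_diag (w : Circle) (a : Spin) :
    toCircleProd hmc hm2 ⟨(w, w, a), Or.inl rfl⟩ = (w ^ 2, a) := by
  have h : sign hm2 ⟨(w, w, a), Or.inl rfl⟩ = 1 := sign_of_ratio_eq_one hm2 (div_self' w)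
  exact Prod.ext rfl (by simp [toCircleProd, h])

lemma toCircleProd_mk_antidiag (w : Circle) (a : Spin) :
    toCircleProd hmc hm2 ⟨(negOne * w, w, a), Or.inr rfl⟩ = (w ^ 2, m * a) := by
  have h : sign hm2 ⟨(negOne * w, w, a), Or.inr rfl⟩ = m :=
    sign_of_ratio_eq_negOne hm2 (mul_div_cancel_right negOne w)
  exact Prod.ext rfl (by simp [toCircleProd, h])

lemma toCircleProd_surjective : Function.Surjective (toCircleProd hmc hm2) := by
  rintro ⟨u, a⟩
  obtain ⟨θ, rfl⟩ := Circle.exp_surjective u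
  exact ⟨_, (toCircleProd_mk_diag hmc hm2 _ a).trans (by rw [Circle.exp_half_sq])⟩

lemma ker_toCircleProd :
    (toCircleProd hmc hm2).ker = Subgroup.normalClosure
      {(⟨(negOne, negOne, 1), Or.inl rfl⟩ : ↥(pmSubgroup Spin)),
       (⟨(negOne, 1, m), Or.inr (by rw [mul_one])⟩ : ↥(pmSubgroup Spin))} := by
  have hm : m * m = 1 := by rw [← sq, hm2]
  have hg2 : (⟨(negOne, 1, m), Or.inr (by rw [mul_one])⟩ : ↥(pmSubgroup Spin)) =
      ⟨(negOne * 1, 1, m), Or.inr rfl⟩ :=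
    Subtype.ext (Prod.ext (mul_one negOne).symm rfl)
  refine le_antisymm (fun x hx => ?_) (Subgroup.normalClosure_le_normal ?_)
  · obtain ⟨w, a, rfl | rfl⟩ := exists_eq_mk x
    · obtain ⟨hw, rfl⟩ := Prod.mk_eq_one.mp ((toCircleProd_mk_diag hmc hm2 w a).symm.trans hx)
      rcases Circle.eq_one_or_eq_negOne_of_sq_eq_one hw with rfl | rfl
      · exact Subgroup.one_mem _
      · exact Subgroup.subset_normalClosure (Or.inl rfl)
    · obtain ⟨hw, ha⟩ :=
        Prod.mk_eq_one.mp ((toCircleProd_mk_antidiag hmc hm2 w a).symm.trans hx)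
      obtain rfl : a = m := (eq_inv_of_mul_eq_one_right ha).trans (inv_eq_of_mul_eq_one_right hm)
      rcases Circle.eq_one_or_eq_negOne_of_sq_eq_one hw with rfl | rfl
      · exact hg2 ▸ Subgroup.subset_normalClosure (Or.inr rfl)
      · have hprod : (⟨(negOne * negOne, negOne, a), Or.inr rfl⟩ : ↥(pmSubgroup Spin)) =
            ⟨(negOne, negOne, 1), Or.inl rfl⟩ * ⟨(negOne, 1, a), Or.inr (by rw [mul_one])⟩ :=
          Subtype.ext (Prod.ext rfl (Prod.ext (mul_one _).symm (one_mul _).symm))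
        exact hprod ▸ Subgroup.mul_mem _ (Subgroup.subset_normalClosure (Or.inl rfl))
          (Subgroup.subset_normalClosure (Or.inr rfl))
  · rintro _ (rfl | rfl)
    · exact (toCircleProd_mk_diag hmc hm2 negOne 1).trans
        (Prod.ext ((sq negOne).trans negOne_mul_negOne) rfl)
    · rw [SetLike.mem_coe, hg2, MonoidHom.mem_ker, toCircleProd_mk_antidiag, one_pow, hm]
      rfl

end pmSubgroup

/-- Let `Spin` model `Spin(n)` (`n ≥ 3`) with central element `m = -1 ≠ 1`
of order two.  Let `H̃` be the quotient of
`{(e^{it}, e^{is}, a) ∈ U(1) × U(1) × Spin(n) : e^{it} = ±e^{is}}` by the normal subgroup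
generated by `(-1,-1,1)` and `(-1,1,-1)`.  Then the map
`⟨e^{it}, e^{is}, a⟩ ↦ (e^{2is}, e^{i(t-s)}·a)` (which sends `⟨w, w, a⟩ ↦ (w², a)` and
`⟨-w, w, a⟩ ↦ (w², -a)`) is a well-defined group isomorphism `H̃ → SO(2) × Spin(n)`
(with `SO(2)` identified with `U(1)` via `ρ₂(e^{is}) = e^{2is}`), whose inverse is
`(e^{is}, a) ↦ ⟨e^{is/2}, e^{is/2}, a⟩`. -/
theorem stabilizer_group_iso_so2_times_spin
    (Spin : Type) [Group Spin]
    (m : Spin) (hmc : m ∈ Subgroup.center Spin) (hm2 : m ^ 2 = 1) :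
    ∃ f : ↥(pmSubgroup Spin) ⧸
        Subgroup.normalClosure
          {(⟨(negOne, negOne, 1), Or.inl rfl⟩ : ↥(pmSubgroup Spin)),
           (⟨(negOne, 1, m), Or.inr (by rw [mul_one])⟩ : ↥(pmSubgroup Spin))} →*
        Circle × Spin,
      (∀ (w : Circle) (a : Spin),
        f (QuotientGroup.mk ⟨(w, w, a), Or.inl rfl⟩) = (w ^ 2, a)) ∧
      (∀ (w : Circle) (a : Spin),
        f (QuotientGroup.mk ⟨(negOne * w, w, a), Or.inr rfl⟩) = (w ^ 2, m * a)) ∧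
      Function.Bijective f := by
  let e := (QuotientGroup.quotientMulEquivOfEq (pmSubgroup.ker_toCircleProd hmc hm2)).symm.trans
    (QuotientGroup.quotientKerEquivOfSurjective _ (pmSubgroup.toCircleProd_surjective hmc hm2))
  exact ⟨e.toMonoidHom, pmSubgroup.toCircleProd_mk_diag hmc hm2,
    pmSubgroup.toCircleProd_mk_antidiag hmc hm2, e.bijective⟩
end
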